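/- Define E(z) := ∫₀^{π/2} e( sin²θ / z ) sin θ dθ for z > 0. There is an absolute constant C such that |E(z)| ≤ C · min(1, z^{1/2}) for all z > 0. -/

import Mathlib

open MeasureTheory intervalIntegral

/-- `e(x) = exp(2πix)`. -/
noncomputable def e (x : ℝ) : ℂ := Complex.exp (2 * Real.pi * Complex.I * x)

/-- `E(z) = ∫₀^{π/2} e(sin²θ/z) sin θ dθ`. -/
noncomputable def Efun (z : ℝ) : ℂ :=
  ∫ θ in (0 : ℝ)..(Real.pi / 2), e (Real.sin θ ^ 2 / z) * (Real.sin θ : ℂ)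

/-!
Substituting `u = cos θ` gives `E(z) = e(1/z) ∫₀¹ e(-u²/z) du`, whose modulus is trivially at
most `1`. For `z ≤ 1` split the integral at `√z`: the initial piece has modulus at most `√z`,
and on `[√z, 1]` the phase `2πu²/z` has derivative at least `4π/√z`, so integrating by parts
against it bounds that piece by `√z/(2π)`.
-/

open Complex

theorem integral_comp_cos_mul_sin {g : ℝ → ℂ} (hg : Continuous g) :
    ∫ θ in (0 : ℝ)..(Real.pi / 2), g (Real.cos θ) * (Real.sin θ : ℂ) =
      ∫ u in (0 : ℝ)..1, g u := by
  have h := integral_deriv_smul_comp (a := 0) (b := Real.pi / 2) (f' := fun θ => -Real.sin θ)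
    (fun θ _ => Real.hasDerivAt_cos θ) (by fun_prop) hg
  rw [Real.cos_zero, Real.cos_pi_div_two, integral_symm 0 1] at h
  simp only [Function.comp_apply, neg_smul, intervalIntegral.integral_neg, neg_inj,
    Complex.real_smul] at h
  simpa [mul_comm] using h

theorem integral_inv_sq_of_pos {a b : ℝ} (ha : 0 < a) (hab : a ≤ b) :
    ∫ t in a..b, (t ^ 2)⁻¹ = a⁻¹ - b⁻¹ := by
  have h0 : (0 : ℝ) ∉ Set.uIcc a b := by
    rw [Set.uIcc_of_le hab]; exact fun h => ha.not_ge h.1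
  have := integral_zpow (a := a) (b := b) (n := -2) (Or.inr ⟨by norm_num, h0⟩)
  simp only [zpow_neg, zpow_ofNat] at this
  rw [this]
  norm_num
  ring

theorem norm_integral_cexp_mul_I_le (f : ℝ → ℝ) (a b : ℝ) :
    ‖∫ t in a..b, cexp (f t * I)‖ ≤ |b - a| := by
  simpa using norm_integral_le_of_norm_le_const (C := 1) (a := a) (b := b)
    (f := fun t => cexp (f t * I)) fun t _ => (norm_exp_ofReal_mul_I (f t)).le

theorem hasDerivAt_cexp_mul_sq_mul_I (c t : ℝ) :
    HasDerivAt (fun t : ℝ => cexp ((c * t ^ 2 : ℝ) * I))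
      (cexp ((c * t ^ 2 : ℝ) * I) * (2 * c * I * t)) t := by
  have := ((((hasDerivAt_pow 2 t).const_mul c).ofReal_comp).mul_const I).cexp
  convert this using 2
  push_cast; ring

theorem norm_integral_cexp_mul_sq_le {c a b : ℝ} (hc : c ≠ 0) (ha : 0 < a) (hab : a ≤ b) :
    ‖∫ t in a..b, cexp ((c * t ^ 2 : ℝ) * I)‖ ≤ (|c| * a)⁻¹ := by
  set k : ℂ := 2 * c * I
  have hk : k ≠ 0 := by simp [k, hc]
  have hk_norm : ‖k‖ = 2 * |c| := by simp [k]
  have hpos : ∀ t ∈ Set.uIcc a b, 0 < t := fun t ht =>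
    ha.trans_le (Set.uIcc_of_le hab ▸ ht).1
  set v : ℝ → ℂ := fun t => cexp ((c * t ^ 2 : ℝ) * I)
  set u : ℝ → ℂ := fun t => k⁻¹ * ((t⁻¹ : ℝ) : ℂ)
  set u' : ℝ → ℂ := fun t => k⁻¹ * ((-(t ^ 2)⁻¹ : ℝ) : ℂ)
  have hu : ∀ t ∈ Set.uIcc a b, HasDerivAt u (u' t) t := fun t ht => by
    simpa [u, u'] using ((hasDerivAt_inv (hpos t ht).ne').ofReal_comp).const_mul k⁻¹
  have hu'_cont : ContinuousOn u' (Set.uIcc a b) :=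
    continuousOn_const.mul <| continuous_ofReal.comp_continuousOn <|
      ((continuousOn_id.pow 2).inv₀ fun t ht => pow_ne_zero 2 (hpos t ht).ne').neg
  have hparts := integral_mul_deriv_eq_deriv_mul hu
    (fun t _ => hasDerivAt_cexp_mul_sq_mul_I c t) hu'_cont.intervalIntegrable
    ((by fun_prop : Continuous fun t => v t * (k * t)).intervalIntegrable _ _)
  have hv_eq : Set.EqOn v (fun t => u t * (v t * (k * t))) (Set.uIcc a b) := fun t ht => by
    have : (t : ℂ) ≠ 0 := ofReal_ne_zero.mpr (hpos t ht).ne'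
    simp only [u]; push_cast; field_simp
  have hnorm_v : ∀ t, ‖v t‖ = 1 := fun t => norm_exp_ofReal_mul_I _
  have hnorm_u : ∀ t, 0 < t → ‖u t‖ = (2 * |c|)⁻¹ * t⁻¹ := fun t ht => by
    simp [u, hk_norm, abs_of_pos ht]
  have hnorm_u'v : ∀ t, ‖u' t * v t‖ = (2 * |c|)⁻¹ * (t ^ 2)⁻¹ := fun t => by
    rw [norm_mul, hnorm_v, mul_one]
    simp [u', hk_norm]
  have hrem : ‖∫ t in a..b, u' t * v t‖ ≤ (2 * |c|)⁻¹ * (a⁻¹ - b⁻¹) := by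
    calc ‖∫ t in a..b, u' t * v t‖ ≤ ∫ t in a..b, ‖u' t * v t‖ :=
          norm_integral_le_integral_norm hab
      _ = ∫ t in a..b, (2 * |c|)⁻¹ * (t ^ 2)⁻¹ := integral_congr fun t _ => hnorm_u'v t
      _ = (2 * |c|)⁻¹ * (a⁻¹ - b⁻¹) := by
          rw [intervalIntegral.integral_const_mul, integral_inv_sq_of_pos ha hab]
  rw [integral_congr hv_eq, hparts]
  calc ‖u b * v b - u a * v a - ∫ t in a..b, u' t * v t‖
      ≤ ‖u b * v b‖ + ‖u a * v a‖ + ‖∫ t in a..b, u' t * v t‖ :=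
        (norm_sub_le _ _).trans (add_le_add_left (norm_sub_le _ _) _)
    _ ≤ (2 * |c|)⁻¹ * b⁻¹ + (2 * |c|)⁻¹ * a⁻¹ + (2 * |c|)⁻¹ * (a⁻¹ - b⁻¹) := by
        rw [norm_mul (u b), norm_mul (u a), hnorm_v, hnorm_v, hnorm_u b (ha.trans_le hab),
          hnorm_u a ha, mul_one, mul_one]
        linarith
    _ = (|c| * a)⁻¹ := by field_simp; ring

theorem norm_integral_zero_cexp_mul_sq_le {c δ b : ℝ} (hc : c ≠ 0) (hδ : 0 < δ)
    (hδb : δ ≤ b) :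
    ‖∫ t in (0 : ℝ)..b, cexp ((c * t ^ 2 : ℝ) * I)‖ ≤ δ + (|c| * δ)⁻¹ := by
  have hint (a b : ℝ) :
      IntervalIntegrable (fun t : ℝ => cexp ((c * t ^ 2 : ℝ) * I)) volume a b :=
    (by fun_prop : Continuous fun t : ℝ => cexp ((c * t ^ 2 : ℝ) * I)).intervalIntegrable a b
  rw [← integral_add_adjacent_intervals (hint 0 δ) (hint δ b)]
  calc _ ≤ _ := norm_add_le _ _
    _ ≤ |δ - 0| + (|c| * δ)⁻¹ :=
        add_le_add (norm_integral_cexp_mul_I_le _ 0 δ) (norm_integral_cexp_mul_sq_le hc hδ hδb)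
    _ = δ + (|c| * δ)⁻¹ := by rw [sub_zero, abs_of_pos hδ]

theorem e_eq_cexp (x : ℝ) : e x = cexp ((2 * Real.pi * x : ℝ) * I) := by
  rw [e]; push_cast; ring_nf

theorem Efun_eq_integral (z : ℝ) :
    Efun z = e z⁻¹ * ∫ t in (0 : ℝ)..1, cexp ((-(2 * Real.pi / z) * t ^ 2 : ℝ) * I) := by
  rw [← intervalIntegral.integral_const_mul, ← integral_comp_cos_mul_sin (by fun_prop), Efun]
  refine integral_congr fun θ _ => ?_
  rw [e_eq_cexp, e_eq_cexp, ← Complex.exp_add, Real.sin_sq]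
  congr 2
  push_cast
  ring

theorem norm_Efun (z : ℝ) :
    ‖Efun z‖ = ‖∫ t in (0 : ℝ)..1, cexp ((-(2 * Real.pi / z) * t ^ 2 : ℝ) * I)‖ := by
  rw [Efun_eq_integral, norm_mul, e_eq_cexp, norm_exp_ofReal_mul_I, one_mul]

/-- There is an absolute constant `C` with
`|E(z)| ≤ C · min(1, √z)` for all `z > 0`. -/
theorem Efun_bound :
    ∃ C : ℝ, ∀ z : ℝ, 0 < z → ‖Efun z‖ ≤ C * min 1 (Real.sqrt z) := by
  refine ⟨2, fun z hz => ?_⟩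
  rw [norm_Efun]
  rcases le_or_gt z 1 with hz1 | hz1
  · have hc : -(2 * Real.pi / z) ≠ 0 := neg_ne_zero.mpr (by positivity)
    calc _ ≤ √z + (|-(2 * Real.pi / z)| * √z)⁻¹ :=
          norm_integral_zero_cexp_mul_sq_le hc (Real.sqrt_pos.mpr hz) (Real.sqrt_le_one.mpr hz1)
      _ ≤ 2 * min 1 √z := by
          rw [min_eq_right (Real.sqrt_le_one.mpr hz1), abs_neg, abs_of_pos (by positivity)]
          have hs : 0 < √z := Real.sqrt_pos.mpr hz
          field_simp
          nlinarith [Real.sq_sqrt hz.le, Real.pi_gt_three]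
  · calc _ ≤ |1 - 0| := norm_integral_cexp_mul_I_le _ 0 1
      _ ≤ 2 * min 1 √z := by rw [min_eq_left (Real.one_le_sqrt.mpr hz1.le)]; norm_num
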